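/- arXiv:2604.26592 — 7 statements merged into one kernel-verified Lean document; each statement's English description precedes it below -/
import Mathlib

section
/- The sequence A_n = \sum_{k=0}^n \binom{n}{k}^2 \binom{n+k}{k}^2 satisfies the Apéry recurrence n^3 u_n - (34 n^3 - 51 n^2 + 27 n - 5) u_{n-1} + (n-1)^3 u_{n-2} = 0 for all n \geq 2. -/
/-- The Apéry numbers associated with `ζ(3)`:
`A n = ∑_{k=0}^n (n choose k)^2 * ((n+k) choose k)^2`. -/
def aperyA (n : ℕ) : ℤ :=
  ∑ k ∈ Finset.range (n + 1), (n.choose k : ℤ) ^ 2 * ((n + k).choose k : ℤ) ^ 2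

/-- Summand of the Apéry numbers, as a rational. -/
def aperyF (n k : ℕ) : ℚ := (n.choose k : ℚ) ^ 2 * ((n + k).choose k : ℚ) ^ 2

/-- WZ certificate for the Apéry recurrence (with `n = m + 2`). -/
def aperyG (m k : ℕ) : ℚ :=
  (4 * (k : ℚ) ^ 4 * (2 * (m : ℚ) + 3) *
      (2 * (k : ℚ) ^ 2 - 3 * (k : ℚ) - 4 * ((m : ℚ) + 2) * ((m : ℚ) + 1))) /
    ((((m : ℚ) + 2) + k) ^ 2 * (((m : ℚ) + 1) + k) ^ 2) * aperyF (m + 2) k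

lemma cast_choose_pred (n k : ℕ) :
    ((n : ℚ) + 1) * (n.choose k) = ((n + 1).choose k) * ((n : ℚ) + 1 - k) := by
  rcases le_or_gt k (n + 1) with h | h
  · have h1 : (n + 1) * n.choose k = (n + 1).choose k * (n + 1 - k) := by
      rw [← Nat.choose_succ_right_eq, ← Nat.add_one_mul_choose_eq]
    have := congrArg (fun x : ℕ => (x : ℚ)) h1
    push_cast [Nat.cast_sub h] at this
    linarith
  · have h1 : n.choose k = 0 := Nat.choose_eq_zero_of_lt (by omega)
    have h2 : (n + 1).choose k = 0 := Nat.choose_eq_zero_of_lt h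
    simp [h1, h2]

lemma cast_choose_succ_right (n k : ℕ) :
    ((k : ℚ) + 1) * (n.choose (k + 1)) = (n.choose k) * ((n : ℚ) - k) := by
  rcases le_or_gt k n with h | h
  · have h1 : n.choose (k + 1) * (k + 1) = n.choose k * (n - k) :=
      Nat.choose_succ_right_eq n k
    have := congrArg (fun x : ℕ => (x : ℚ)) h1
    push_cast [Nat.cast_sub h] at this
    push_cast
    linarith
  · have h1 : n.choose k = 0 := Nat.choose_eq_zero_of_lt h
    have h2 : n.choose (k + 1) = 0 := Nat.choose_eq_zero_of_lt (by omega)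
    simp [h1, h2]

lemma cast_succ_mul_choose (n k : ℕ) :
    ((n : ℚ) + 1) * (n.choose k) = ((n + 1).choose (k + 1)) * ((k : ℚ) + 1) := by
  exact_mod_cast congrArg (fun x : ℕ => (x : ℚ)) (Nat.add_one_mul_choose_eq n k)

/-- The local WZ identity. -/
lemma apery_local (m k : ℕ) :
    ((m : ℚ) + 2) ^ 3 * aperyF (m + 2) k
      - (34 * ((m : ℚ) + 2) ^ 3 - 51 * ((m : ℚ) + 2) ^ 2 + 27 * ((m : ℚ) + 2) - 5) *
        aperyF (m + 1) k
      + ((m : ℚ) + 1) ^ 3 * aperyF m k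
      = aperyG m (k + 1) - aperyG m k := by
  have hm2 : ((m : ℚ) + 2) ≠ 0 := by positivity
  have hm1 : ((m : ℚ) + 1) ≠ 0 := by positivity
  have hk1 : ((k : ℚ) + 1) ≠ 0 := by positivity
  have hmk2 : ((m : ℚ) + 2 + k) ≠ 0 := by positivity
  have hmk1 : ((m : ℚ) + 1 + k) ≠ 0 := by positivity
  have hmk3 : ((m : ℚ) + 3 + k) ≠ 0 := by positivity
  set a : ℚ := ((m + 2).choose k : ℚ) with ha
  set b : ℚ := (((m + 2) + k).choose k : ℚ) with hb
  -- express the shifted binomial coefficients in terms of a and b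
  have h1 : ((m + 1).choose k : ℚ) = ((m : ℚ) + 2 - k) * a / ((m : ℚ) + 2) := by
    rw [eq_div_iff hm2]
    have := cast_choose_pred (m + 1) k
    push_cast at this ⊢
    linarith
  have h2 : (m.choose k : ℚ)
      = ((m : ℚ) + 2 - k) * ((m : ℚ) + 1 - k) * a / (((m : ℚ) + 2) * ((m : ℚ) + 1)) := by
    rw [eq_div_iff (by positivity)]
    have t1 := cast_choose_pred m k
    rw [h1] at t1
    field_simp at t1
    push_cast at t1 ⊢
    linarith
  have h3 : (((m + 1) + k).choose k : ℚ) = ((m : ℚ) + 2) * b / ((m : ℚ) + 2 + k) := by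
    rw [eq_div_iff hmk2]
    have := cast_choose_pred (m + 1 + k) k
    have harg : m + 1 + k + 1 = m + 2 + k := by omega
    rw [harg] at this
    push_cast at this ⊢
    linarith
  have h4 : ((m + k).choose k : ℚ)
      = ((m : ℚ) + 2) * ((m : ℚ) + 1) * b / (((m : ℚ) + 2 + k) * ((m : ℚ) + 1 + k)) := by
    rw [eq_div_iff (by positivity)]
    have t1 := cast_choose_pred (m + k) k
    have harg : m + k + 1 = m + 1 + k := by omega
    rw [harg] at t1
    rw [h3] at t1
    field_simp at t1
    push_cast at t1 ⊢
    linarith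
  have h5 : ((m + 2).choose (k + 1) : ℚ) = ((m : ℚ) + 2 - k) * a / ((k : ℚ) + 1) := by
    rw [eq_div_iff hk1]
    have := cast_choose_succ_right (m + 2) k
    push_cast at this ⊢
    linarith
  have h6 : (((m + 2) + (k + 1)).choose (k + 1) : ℚ)
      = ((m : ℚ) + 3 + k) * b / ((k : ℚ) + 1) := by
    rw [eq_div_iff hk1]
    have := cast_succ_mul_choose (m + 2 + k) k
    have harg : m + 2 + k + 1 = m + 2 + (k + 1) := by omega
    rw [harg] at this
    push_cast at this ⊢
    linarith
  simp only [aperyG, aperyF]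
  rw [h1, h2, h5, h6]
  have harg3 : m + 1 + k = (m + 1) + k := rfl
  rw [show ((m + 1 + k).choose k : ℚ) = ((m : ℚ) + 2) * b / ((m : ℚ) + 2 + k) from h3,
    show ((m + k).choose k : ℚ)
      = ((m : ℚ) + 2) * ((m : ℚ) + 1) * b / (((m : ℚ) + 2 + k) * ((m : ℚ) + 1 + k)) from h4]
  rw [← ha, ← hb]
  push_cast
  field_simp
  ring

lemma aperyG_zero_left (m : ℕ) : aperyG m 0 = 0 := by
  simp [aperyG]

lemma aperyG_zero_right (m : ℕ) : aperyG m (m + 3) = 0 := by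
  have : (m + 2).choose (m + 3) = 0 := Nat.choose_eq_zero_of_lt (by omega)
  simp [aperyG, aperyF, this]

/-- The Apéry numbers satisfy the Apéry recurrence
`n³ uₙ - (34n³ - 51n² + 27n - 5) uₙ₋₁ + (n-1)³ uₙ₋₂ = 0` for all `n ≥ 2`. -/
theorem aperyA_recurrence (n : ℕ) (hn : 2 ≤ n) :
    (n : ℤ) ^ 3 * aperyA n
      - (34 * (n : ℤ) ^ 3 - 51 * (n : ℤ) ^ 2 + 27 * (n : ℤ) - 5) * aperyA (n - 1)
      + ((n : ℤ) - 1) ^ 3 * aperyA (n - 2) = 0 := by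
  obtain ⟨m, rfl⟩ : ∃ m, n = m + 2 := ⟨n - 2, by omega⟩
  have hq :
      ((m : ℚ) + 2) ^ 3 * ((aperyA (m + 2) : ℤ) : ℚ)
        - (34 * ((m : ℚ) + 2) ^ 3 - 51 * ((m : ℚ) + 2) ^ 2 + 27 * ((m : ℚ) + 2) - 5) *
          ((aperyA (m + 1) : ℤ) : ℚ)
        + ((m : ℚ) + 1) ^ 3 * ((aperyA m : ℤ) : ℚ) = 0 := by
    have hA2 : ((aperyA (m + 2) : ℤ) : ℚ)
        = ∑ k ∈ Finset.range (m + 3), aperyF (m + 2) k := by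
      simp only [aperyA, aperyF]
      push_cast
      rfl
    have hA1 : ((aperyA (m + 1) : ℤ) : ℚ)
        = ∑ k ∈ Finset.range (m + 3), aperyF (m + 1) k := by
      have hz : aperyF (m + 1) (m + 2) = 0 := by
        have : (m + 1).choose (m + 2) = 0 := Nat.choose_eq_zero_of_lt (by omega)
        simp [aperyF, this]
      rw [Finset.sum_range_succ, hz, add_zero]
      simp only [aperyA, aperyF]
      push_cast
      rfl
    have hA0 : ((aperyA m : ℤ) : ℚ) = ∑ k ∈ Finset.range (m + 3), aperyF m k := by
      have hz1 : aperyF m (m + 2) = 0 := by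
        have : m.choose (m + 2) = 0 := Nat.choose_eq_zero_of_lt (by omega)
        simp [aperyF, this]
      have hz2 : aperyF m (m + 1) = 0 := by
        have : m.choose (m + 1) = 0 := Nat.choose_eq_zero_of_lt (by omega)
        simp [aperyF, this]
      rw [Finset.sum_range_succ, hz1, add_zero, Finset.sum_range_succ, hz2, add_zero]
      simp only [aperyA, aperyF]
      push_cast
      rfl
    rw [hA2, hA1, hA0, Finset.mul_sum, Finset.mul_sum, Finset.mul_sum, ← Finset.sum_sub_distrib,
      ← Finset.sum_add_distrib]
    have : ∀ k ∈ Finset.range (m + 3),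
        ((m : ℚ) + 2) ^ 3 * aperyF (m + 2) k
          - (34 * ((m : ℚ) + 2) ^ 3 - 51 * ((m : ℚ) + 2) ^ 2 + 27 * ((m : ℚ) + 2) - 5) *
            aperyF (m + 1) k
          + ((m : ℚ) + 1) ^ 3 * aperyF m k
          = aperyG m (k + 1) - aperyG m k := fun k _ => apery_local m k
    rw [Finset.sum_congr rfl this, Finset.sum_range_sub (aperyG m), aperyG_zero_left,
      aperyG_zero_right, sub_zero]
  have e1 : m + 2 - 1 = m + 1 := rfl
  have e2 : m + 2 - 2 = m := rfl
  rw [e1, e2]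
  have hcast : ∀ x : ℤ, (x : ℚ) = 0 → x = 0 := fun x hx => by exact_mod_cast hx
  apply hcast
  push_cast
  push_cast at hq
  linarith [hq]
end

section
/- The sequence \widetilde{A}_n = \sum_{k=0}^n \binom{n}{k}^2 \binom{n+k}{k} satisfies the small Apéry recurrence n^2 u_n - (11 n^2 - 11 n + 3) u_{n-1} - (n-1)^2 u_{n-2} = 0 for all n \geq 2. -/
/-- The small Apéry numbers associated with `ζ(2)`:
`Ã n = ∑_{k=0}^n (n choose k)^2 * ((n+k) choose k)`. -/
def aperyASmall (n : ℕ) : ℤ :=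
  ∑ k ∈ Finset.range (n + 1), (n.choose k : ℤ) ^ 2 * ((n + k).choose k : ℤ)

private lemma relA (N k : ℕ) :
    ((N : ℚ) + 1 - k) * ((N + 1).choose k : ℚ) = ((N : ℚ) + 1) * (N.choose k : ℚ) := by
  rcases le_or_gt k (N + 1) with h | h
  · have hz : ((N.choose k : ℚ)) * ((N : ℚ) + 1)
        = (((N + 1).choose k : ℚ)) * (((N + 1 - k : ℕ) : ℚ)) := by
      exact_mod_cast Nat.choose_mul_succ_eq N k
    have hc : ((N + 1 - k : ℕ) : ℚ) = (N : ℚ) + 1 - k := by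
      push_cast [h]; ring
    rw [hc] at hz
    linear_combination -hz
  · have h1 : (N + 1).choose k = 0 := Nat.choose_eq_zero_of_lt h
    have h2 : N.choose k = 0 := Nat.choose_eq_zero_of_lt (by omega)
    simp [h1, h2]

private lemma relB (N k : ℕ) :
    ((k : ℚ) + 1) * (N.choose (k + 1) : ℚ) = ((N : ℚ) - k) * (N.choose k : ℚ) := by
  rcases lt_or_ge k N with h | h
  · have hz : ((N.choose (k + 1) : ℚ)) * ((k : ℚ) + 1)
        = ((N.choose k : ℚ)) * (((N - k : ℕ) : ℚ)) := by
      exact_mod_cast Nat.choose_succ_right_eq N k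
    have hc : ((N - k : ℕ) : ℚ) = (N : ℚ) - k := by
      have hkN : k ≤ N := le_of_lt h
      push_cast [hkN]; ring
    rw [hc] at hz
    linear_combination hz
  · rcases eq_or_lt_of_le h with rfl | h'
    · simp [Nat.choose_eq_zero_of_lt (Nat.lt_succ_self N)]
    · have h1 : N.choose (k + 1) = 0 := Nat.choose_eq_zero_of_lt (by omega)
      have h2 : N.choose k = 0 := Nat.choose_eq_zero_of_lt h'
      simp [h1, h2]

private lemma relC (N k : ℕ) :
    ((k : ℚ) + 1) * ((N + 1).choose (k + 1) : ℚ) = ((N : ℚ) + 1) * (N.choose k : ℚ) := by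
  have hz0 : (N + 1) * N.choose k = (N + 1).choose (k + 1) * (k + 1) := by
    simpa [Nat.succ_eq_add_one] using Nat.add_one_mul_choose_eq N k
  have hz : ((N : ℚ) + 1) * (N.choose k : ℚ)
      = (((N + 1).choose (k + 1) : ℚ)) * ((k : ℚ) + 1) := by
    exact_mod_cast hz0
  linear_combination -hz

/-- The Zeilberger certificate function for the small Apéry recurrence. -/
private def Gq (m k : ℕ) : ℚ :=
  (k : ℚ) ^ 3 * ((k : ℚ) ^ 2 + (6 * (m : ℚ) + 7) * k + 7 * ((m : ℚ) + 2) - 11 * ((m : ℚ) + 2) ^ 2)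
    * ((m + 2).choose k : ℚ) ^ 2 * ((m + 2 + k).choose k : ℚ)
    / (((m : ℚ) + 2) * ((m : ℚ) + 2 + k) * ((m : ℚ) + 1 + k))

private lemma key (m k : ℕ) :
    ((m : ℚ) + 2) ^ 2 * ((m + 2).choose k : ℚ) ^ 2 * ((m + 2 + k).choose k : ℚ)
      - (11 * ((m : ℚ) + 2) ^ 2 - 11 * ((m : ℚ) + 2) + 3)
          * ((m + 1).choose k : ℚ) ^ 2 * ((m + 1 + k).choose k : ℚ)
      - ((m : ℚ) + 1) ^ 2 * (m.choose k : ℚ) ^ 2 * ((m + k).choose k : ℚ)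
      = Gq m (k + 1) - Gq m k := by
  have hm2 : ((m : ℚ) + 2) ≠ 0 := by positivity
  have hm1 : ((m : ℚ) + 1) ≠ 0 := by positivity
  have hm2k : ((m : ℚ) + 2 + k) ≠ 0 := by positivity
  have hm1k : ((m : ℚ) + 1 + k) ≠ 0 := by positivity
  have hk1 : ((k : ℚ) + 1) ≠ 0 := by positivity
  have hm3k : ((m : ℚ) + 3 + k) ≠ 0 := by positivity
  -- express all shifted binomials in terms of x := C(m+2,k), y := C(m+2+k,k)
  have h1 : ((m + 1).choose k : ℚ)
      = ((m : ℚ) + 2 - k) * ((m + 2).choose k : ℚ) / ((m : ℚ) + 2) := by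
    have r := relA (m + 1) k
    have e : m + 1 + 1 = m + 2 := rfl
    rw [e] at r
    push_cast at r
    field_simp
    linear_combination -r
  have h2 : (m.choose k : ℚ)
      = ((m : ℚ) + 1 - k) * ((m + 1).choose k : ℚ) / ((m : ℚ) + 1) := by
    have r := relA m k
    push_cast at r
    field_simp
    linear_combination -r
  have h3 : ((m + 1 + k).choose k : ℚ)
      = ((m : ℚ) + 2) * ((m + 2 + k).choose k : ℚ) / ((m : ℚ) + 2 + k) := by
    have r := relA (m + 1 + k) k
    have e : m + 1 + k + 1 = m + 2 + k := by omega
    rw [e] at r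
    push_cast at r
    field_simp
    linear_combination -r
  have h4 : ((m + k).choose k : ℚ)
      = ((m : ℚ) + 1) * ((m + 1 + k).choose k : ℚ) / ((m : ℚ) + 1 + k) := by
    have r := relA (m + k) k
    have e : m + k + 1 = m + 1 + k := by omega
    rw [e] at r
    push_cast at r
    field_simp
    linear_combination -r
  have h5 : ((m + 2).choose (k + 1) : ℚ)
      = ((m : ℚ) + 2 - k) * ((m + 2).choose k : ℚ) / ((k : ℚ) + 1) := by
    have r := relB (m + 2) k
    push_cast at r
    field_simp
    linear_combination r
  have h6 : ((m + 2 + (k + 1)).choose (k + 1) : ℚ)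
      = ((m : ℚ) + 3 + k) * ((m + 2 + k).choose k : ℚ) / ((k : ℚ) + 1) := by
    have := relC (m + 2 + k) k
    push_cast at this
    have e : m + 2 + (k + 1) = m + 2 + k + 1 := rfl
    rw [e]
    field_simp
    linarith [this]
  rw [Gq, Gq, h6, h5, h2, h1, h4, h3]
  push_cast
  field_simp
  ring

/-- The small Apéry numbers satisfy the small Apéry recurrence
`n² uₙ - (11n² - 11n + 3) uₙ₋₁ - (n-1)² uₙ₋₂ = 0` for all `n ≥ 2`. -/
theorem aperyASmall_recurrence (n : ℕ) (hn : 2 ≤ n) :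
    (n : ℤ) ^ 2 * aperyASmall n
      - (11 * (n : ℤ) ^ 2 - 11 * (n : ℤ) + 3) * aperyASmall (n - 1)
      - ((n : ℤ) - 1) ^ 2 * aperyASmall (n - 2) = 0 := by
  obtain ⟨m, rfl⟩ : ∃ m, n = m + 2 := ⟨n - 2, by omega⟩
  have e1 : m + 2 - 1 = m + 1 := rfl
  have e2 : m + 2 - 2 = m := rfl
  rw [e1, e2]
  have hq : (((m + 2 : ℕ) : ℚ)) ^ 2 * ((aperyASmall (m + 2) : ℤ) : ℚ)
      - (11 * ((m + 2 : ℕ) : ℚ) ^ 2 - 11 * ((m + 2 : ℕ) : ℚ) + 3) * ((aperyASmall (m + 1) : ℤ) : ℚ)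
      - (((m + 2 : ℕ) : ℚ) - 1) ^ 2 * ((aperyASmall m : ℤ) : ℚ) = 0 := by
    have hA2 : ((aperyASmall (m + 2) : ℤ) : ℚ)
        = ∑ k ∈ Finset.range (m + 3),
            ((m + 2).choose k : ℚ) ^ 2 * ((m + 2 + k).choose k : ℚ) := by
      rw [aperyASmall]; push_cast; rfl
    have hA1 : ((aperyASmall (m + 1) : ℤ) : ℚ)
        = ∑ k ∈ Finset.range (m + 3),
            ((m + 1).choose k : ℚ) ^ 2 * ((m + 1 + k).choose k : ℚ) := by
      rw [aperyASmall]
      rw [Finset.sum_range_succ (n := m + 2)]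
      have hz : (m + 1).choose (m + 2) = 0 := Nat.choose_eq_zero_of_lt (by omega)
      push_cast [hz]
      ring
    have hA0 : ((aperyASmall m : ℤ) : ℚ)
        = ∑ k ∈ Finset.range (m + 3),
            (m.choose k : ℚ) ^ 2 * ((m + k).choose k : ℚ) := by
      rw [aperyASmall]
      rw [Finset.sum_range_succ (n := m + 2), Finset.sum_range_succ (n := m + 1)]
      have hz1 : m.choose (m + 2) = 0 := Nat.choose_eq_zero_of_lt (by omega)
      have hz2 : m.choose (m + 1) = 0 := Nat.choose_eq_zero_of_lt (by omega)
      push_cast [hz1, hz2]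
      ring
    rw [hA2, hA1, hA0]
    push_cast
    rw [Finset.mul_sum, Finset.mul_sum, Finset.mul_sum, ← Finset.sum_sub_distrib,
      ← Finset.sum_sub_distrib]
    have : ∀ k ∈ Finset.range (m + 3),
        ((m : ℚ) + 2) ^ 2 * (((m + 2).choose k : ℚ) ^ 2 * ((m + 2 + k).choose k : ℚ))
          - (11 * ((m : ℚ) + 2) ^ 2 - 11 * ((m : ℚ) + 2) + 3)
              * (((m + 1).choose k : ℚ) ^ 2 * ((m + 1 + k).choose k : ℚ))
          - ((m : ℚ) + 2 - 1) ^ 2 * ((m.choose k : ℚ) ^ 2 * ((m + k).choose k : ℚ))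
          = Gq m (k + 1) - Gq m k := by
      intro k _
      have hkey := key m k
      linear_combination hkey
    rw [Finset.sum_congr rfl this, Finset.sum_range_sub (f := Gq m)]
    have hG0 : Gq m 0 = 0 := by simp [Gq]
    have hGtop : Gq m (m + 3) = 0 := by
      have hz : (m + 2).choose (m + 3) = 0 := Nat.choose_eq_zero_of_lt (by omega)
      simp [Gq, hz]
    rw [hG0, hGtop]
    ring
  exact_mod_cast hq
end

section
/- With initial conditions A_0 = 1, A_1 = 5, every term A_n of the solution to the recurrence n^3 u_n - (34 n^3 - 51 n^2 + 27 n - 5) u_{n-1} + (n-1)^3 u_{n-2} = 0 is a positive integer. -/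
open Finset

namespace AperyAux

def c (n k : ℕ) : ℚ := (n.choose k : ℚ)^2 * ((n+k).choose k : ℚ)^2

def G (n k : ℕ) : ℚ :=
  4*(2*(n:ℚ)+1)*((k:ℚ)*(2*(k:ℚ)+1)-(2*(n:ℚ)+1)^2) * c n k

def g (n : ℕ) : ℕ → ℚ
  | 0 => 0
  | (j+1) => G n j

lemma generic (n j : ℕ) (hn : 1 ≤ n) (hj : j + 1 ≤ n) :
    ((n:ℚ)+1)^3 * c (n+1) (j+1)
      - (34*((n:ℚ)+1)^3 - 51*((n:ℚ)+1)^2 + 27*((n:ℚ)+1) - 5) * c n (j+1)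
      + (n:ℚ)^3 * c (n-1) (j+1) = g n (j+1+1) - g n (j+1) := by
  have hjn : (j:ℚ) < n := by exact_mod_cast Nat.lt_of_lt_of_le (Nat.lt_succ_self j) hj
  have hnj : ((n:ℚ) - j) ≠ 0 := by intro h; nlinarith
  have hn0 : (n:ℚ) ≠ 0 := Nat.cast_ne_zero.mpr (by omega)
  have hn1 : ((n:ℚ) + 1) ≠ 0 := by positivity
  have hnk : ((n:ℚ) + j + 1) ≠ 0 := by positivity
  set a : ℚ := (n.choose (j+1) : ℚ) with ha
  set b : ℚ := ((n+(j+1)).choose (j+1) : ℚ) with hb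
  have cast_sub : ∀ p q : ℕ, q ≤ p → ((p - q : ℕ) : ℚ) = (p:ℚ) - q := fun p q h => by
    rw [Nat.cast_sub h]
  have e1 : ((n+1).choose (j+1) : ℚ) = a * ((n:ℚ)+1) / ((n:ℚ) - j) := by
    have h1 : n.choose (j+1) * (n+1) = (n+1).choose (j+1) * (n - j) := by
      have := Nat.choose_mul_succ_eq n (j+1)
      rwa [show n+1-(j+1) = n-j from by omega] at this
    have := congrArg (Nat.cast : ℕ → ℚ) h1
    push_cast [cast_sub n j (by omega)] at this
    rw [eq_div_iff hnj]; linarith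
  have e2 : ((n-1).choose (j+1) : ℚ) = a * ((n:ℚ) - j - 1) / (n:ℚ) := by
    have h2 : (n-1).choose (j+1) * n = n.choose (j+1) * (n - (j+1)) := by
      have := Nat.choose_mul_succ_eq (n-1) (j+1)
      rwa [show n-1+1 = n from by omega] at this
    have := congrArg (Nat.cast : ℕ → ℚ) h2
    push_cast [cast_sub n (j+1) (by omega)] at this
    rw [eq_div_iff hn0]; linarith
  have e3 : ((n+1+(j+1)).choose (j+1) : ℚ) = b * ((n:ℚ)+j+2) / ((n:ℚ)+1) := by
    have h3 : (n+(j+1)).choose (j+1) * (n+1+(j+1)) = (n+1+(j+1)).choose (j+1) * (n+1) := by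
      have := Nat.choose_mul_succ_eq (n+(j+1)) (j+1)
      rwa [show n+(j+1)+1-(j+1) = n+1 from by omega,
           show n+(j+1)+1 = n+1+(j+1) from by omega] at this
    have := congrArg (Nat.cast : ℕ → ℚ) h3
    push_cast at this
    rw [eq_div_iff hn1]; linarith
  have e4 : ((n-1+(j+1)).choose (j+1) : ℚ) = b * (n:ℚ) / ((n:ℚ)+j+1) := by
    have h4 : (n-1+(j+1)).choose (j+1) * (n+(j+1)) = (n+(j+1)).choose (j+1) * n := by
      have := Nat.choose_mul_succ_eq (n-1+(j+1)) (j+1)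
      rwa [show n-1+(j+1)+1 = n+(j+1) from by omega,
           show n+(j+1)-(j+1) = n from by omega] at this
    have := congrArg (Nat.cast : ℕ → ℚ) h4
    push_cast at this
    rw [eq_div_iff hnk]; linarith
  have e5 : (n.choose j : ℚ) = a * ((j:ℚ)+1) / ((n:ℚ) - j) := by
    have h5 : n.choose (j+1) * (j+1) = n.choose j * (n - j) := Nat.choose_succ_right_eq n j
    have := congrArg (Nat.cast : ℕ → ℚ) h5
    push_cast [cast_sub n j (by omega)] at this
    rw [eq_div_iff hnj]; linarith
  have e6 : ((n+j).choose j : ℚ) = b * ((j:ℚ)+1) / ((n:ℚ)+j+1) := by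
    have h6 : (n+j+1) * (n+j).choose j = (n+j+1).choose (j+1) * (j+1) :=
      Nat.add_one_mul_choose_eq (n+j) j
    have := congrArg (Nat.cast : ℕ → ℚ) h6
    rw [show n+j+1 = n+(j+1) from by omega] at this
    push_cast at this
    rw [eq_div_iff hnk]; linarith
  simp only [c, G, g]
  rw [e1, e2, e3, e4, e5, e6, ← ha, ← hb]
  push_cast
  field_simp
  ring

lemma c_zero (n k : ℕ) (h : n < k) : c n k = 0 := by
  simp [c, Nat.choose_eq_zero_of_lt h]

lemma edge (n : ℕ) (hn : 1 ≤ n) :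
    ((n:ℚ)+1)^3 * c (n+1) (n+1)
      - (34*((n:ℚ)+1)^3 - 51*((n:ℚ)+1)^2 + 27*((n:ℚ)+1) - 5) * c n (n+1)
      + (n:ℚ)^3 * c (n-1) (n+1) = g n (n+1+1) - g n (n+1) := by
  have hn1 : ((n:ℚ) + 1) ≠ 0 := by positivity
  simp only [c, G, g]
  rw [Nat.choose_eq_zero_of_lt (show n < n+1 by omega),
      Nat.choose_eq_zero_of_lt (show n-1 < n+1 by omega),
      show n+1+(n+1) = 2*n+2 from by omega, show n+(n+1) = 2*n+1 from by omega,
      show n+n = 2*n from by omega]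
  simp only [Nat.choose_self, Nat.cast_one]
  set y : ℚ := ((2*n+2).choose (n+1) : ℚ) with hy
  set x : ℚ := ((2*n+1).choose n : ℚ) with hx
  set C : ℚ := ((2*n).choose n : ℚ) with hC
  have s1 : y * ((n:ℚ)+1) = x * (2*(n:ℚ)+2) := by
    have h := Nat.add_one_mul_choose_eq (2*n+1) n
    have := congrArg (Nat.cast : ℕ → ℚ) h
    push_cast at this
    linarith
  have s2 : x * ((n:ℚ)+1) = C * (2*(n:ℚ)+1) := by
    have h := Nat.choose_mul_succ_eq (2*n) n
    rw [show 2*n+1-n = n+1 from by omega] at h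
    have := congrArg (Nat.cast : ℕ → ℚ) h
    push_cast at this
    linarith
  have hyx : y = 2 * x := by
    apply mul_right_cancel₀ hn1
    linarith
  rw [hyx]
  linear_combination (4*((n:ℚ)+1)*(x*((n:ℚ)+1)+C*(2*(n:ℚ)+1))) * s2

lemma local_id (n : ℕ) (hn : 1 ≤ n) (k : ℕ) (hk : k ≤ n+1) :
    ((n:ℚ)+1)^3 * c (n+1) k
      - (34*((n:ℚ)+1)^3 - 51*((n:ℚ)+1)^2 + 27*((n:ℚ)+1) - 5) * c n k
      + (n:ℚ)^3 * c (n-1) k = g n (k+1) - g n k := by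
  rcases Nat.eq_or_lt_of_le hk with hk1 | hk1
  · subst hk1; exact edge n hn
  · have hk' : k ≤ n := by omega
    rcases Nat.eq_zero_or_pos k with rfl | hkpos
    · simp [c, g, G]
      ring
    · obtain ⟨j, rfl⟩ : ∃ j, k = j + 1 := ⟨k-1, by omega⟩
      exact generic n j hn (by omega)

def Bq (n : ℕ) : ℚ := ∑ k ∈ range (n+1), c n k

lemma rec_B (n : ℕ) (hn : 1 ≤ n) :
    ((n:ℚ)+1)^3 * Bq (n+1)
      - (34*((n:ℚ)+1)^3 - 51*((n:ℚ)+1)^2 + 27*((n:ℚ)+1) - 5) * Bq n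
      + (n:ℚ)^3 * Bq (n-1) = 0 := by
  have hB1 : Bq n = ∑ k ∈ range (n+2), c n k := by
    rw [show n+2 = (n+1)+1 from rfl, Finset.sum_range_succ, c_zero n (n+1) (by omega),
        add_zero, Bq]
  have hB2 : Bq (n-1) = ∑ k ∈ range (n+2), c (n-1) k := by
    rw [show n+2 = (n+1)+1 from rfl, Finset.sum_range_succ, Finset.sum_range_succ,
        c_zero (n-1) (n+1) (by omega), c_zero (n-1) n (by omega), add_zero, add_zero, Bq,
        show n-1+1 = n from by omega]
  rw [hB1, hB2, Bq, show n+1+1 = n+2 from rfl, Finset.mul_sum, Finset.mul_sum,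
      Finset.mul_sum, ← Finset.sum_sub_distrib, ← Finset.sum_add_distrib]
  rw [Finset.sum_congr rfl (fun k hk => local_id n hn k (by
        have := Finset.mem_range.mp hk; omega))]
  rw [Finset.sum_range_sub (g n) (n+2)]
  simp [g, G, c_zero n (n+1) (by omega)]

def Bz (n : ℕ) : ℤ := ∑ k ∈ range (n+1), (n.choose k : ℤ)^2 * ((n+k).choose k : ℤ)^2

lemma Bq_eq_Bz (n : ℕ) : Bq n = (Bz n : ℚ) := by
  rw [Bq, Bz]
  push_cast
  rfl

lemma Bz_pos (n : ℕ) : 0 < Bz n := by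
  rw [Bz]
  apply Finset.sum_pos' (fun i _ => by positivity)
  exact ⟨0, Finset.mem_range.mpr (by omega), by simp⟩

end AperyAux

open AperyAux in
/-- If `A : ℕ → ℚ` satisfies the Apéry recurrence
`n³ uₙ - (34n³ - 51n² + 27n - 5) uₙ₋₁ + (n-1)³ uₙ₋₂ = 0` for `n ≥ 2`
with initial conditions `A 0 = 1`, `A 1 = 5`, then every `A n` is a positive integer. -/
theorem apery_solution_integral (A : ℕ → ℚ) (h0 : A 0 = 1) (h1 : A 1 = 5)
    (hrec : ∀ n : ℕ, 2 ≤ n →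
      (n : ℚ) ^ 3 * A n
        - (34 * (n : ℚ) ^ 3 - 51 * (n : ℚ) ^ 2 + 27 * (n : ℚ) - 5) * A (n - 1)
        + ((n : ℚ) - 1) ^ 3 * A (n - 2) = 0) :
    ∀ n : ℕ, ∃ m : ℤ, 0 < m ∧ A n = m := by
  have key : ∀ n, A n = Bq n ∧ A (n+1) = Bq (n+1) := by
    intro n
    induction n with
    | zero =>
      constructor
      · rw [h0]; simp [Bq, c]
      · rw [h1]; norm_num [Bq, c, Finset.sum_range_succ]
    | succ n ih =>
      refine ⟨ih.2, ?_⟩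
      have hr := hrec (n+2) (by omega)
      simp only [show n+2-1 = n+1 from rfl, show n+2-2 = n from rfl] at hr
      have hb := rec_B (n+1) (by omega)
      simp only [show n+1-1 = n from rfl] at hb
      push_cast at hr hb
      have hne : ((n:ℚ)+2)^3 ≠ 0 := by positivity
      have hcancel : ((n:ℚ)+2)^3 * (A (n+2) - Bq (n+2)) = 0 := by
        rw [ih.1, ih.2] at hr
        linear_combination hr - hb
      rcases mul_eq_zero.mp hcancel with h | h
      · exact absurd h hne
      · linarith
  intro n
  refine ⟨Bz n, Bz_pos n, ?_⟩
  rw [(key n).1, Bq_eq_Bz]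
end

section
/- Let A(t) = \sum_{n \geq 0} A_n t^n be the generating series of the Apéry numbers A_n = \sum_{k=0}^n \binom{n}{k}^2 \binom{n+k}{k}^2 (as a formal power series over \mathbb{Q}). Then L(A(t)) = 0, where L = D^3 - t(34 D^3 + 51 D^2 + 27 D + 5) + t^2 (D+1)^3 and D = t \frac{d}{dt}. -/
/-- The operator `D = t d/dt` on formal power series `ℚ[[t]]`:
`(D f)ₙ = n * fₙ`. -/
noncomputable def tD (f : PowerSeries ℚ) : PowerSeries ℚ :=
  PowerSeries.mk fun n => (n : ℚ) * PowerSeries.coeff n f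

/-- The generating series of the Apéry numbers
`A n = ∑_{k=0}^n (n choose k)^2 ((n+k) choose k)^2`. -/
noncomputable def aperyGenSeries : PowerSeries ℚ :=
  PowerSeries.mk fun n =>
    ∑ k ∈ Finset.range (n + 1), (n.choose k : ℚ) ^ 2 * ((n + k).choose k : ℚ) ^ 2

namespace AperyAux

open Finset

/-- The summand of the Apéry numbers. -/
def F (n k : ℕ) : ℚ := (n.choose k : ℚ) ^ 2 * ((n + k).choose k : ℚ) ^ 2

/-- The WZ certificate function. -/
def Bc (n k : ℕ) : ℚ :=
  4 * (2 * (n : ℚ) + 1) * ((k : ℚ) * (2 * k + 1) - (2 * n + 1) ^ 2) * F n k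

set_option maxHeartbeats 4000000

/-- The local WZ identity at column `k + 1`. -/
lemma localS (m k : ℕ) (hk : k ≤ m + 1) :
    ((m : ℚ) + 2) ^ 3 * F (m + 2) (k + 1)
      - (34 * ((m : ℚ) + 1) ^ 3 + 51 * ((m : ℚ) + 1) ^ 2 + 27 * ((m : ℚ) + 1) + 5)
          * F (m + 1) (k + 1)
      + ((m : ℚ) + 1) ^ 3 * F m (k + 1)
    = Bc (m + 1) (k + 1) - Bc (m + 1) k := by
  have hb := Nat.choose_mul_succ_eq (m + k + 2) (k + 1)
  have hd := Nat.choose_mul_succ_eq (m + k + 1) (k + 1)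
  have hf := Nat.add_one_mul_choose_eq (m + k + 1) k
  rw [show m + k + 2 + 1 = m + k + 3 from rfl,
      show m + k + 3 - (k + 1) = m + 2 from by omega] at hb
  rw [show m + k + 1 + 1 = m + k + 2 from rfl,
      show m + k + 2 - (k + 1) = m + 1 from by omega] at hd
  have hb' := congrArg (Nat.cast : ℕ → ℚ) hb
  have hd' := congrArg (Nat.cast : ℕ → ℚ) hd
  have hf' := congrArg (Nat.cast : ℕ → ℚ) hf
  push_cast at hb' hd' hf'
  have hm2 : ((m : ℚ) + 2) ≠ 0 := by positivity
  have hmk2 : ((m : ℚ) + (k : ℚ) + 2) ≠ 0 := by positivity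
  have hq : ((m + k + 3).choose (k + 1) : ℚ)
      = ((m + k + 2).choose (k + 1) : ℚ) * ((m : ℚ) + k + 3) / ((m : ℚ) + 2) := by
    rw [eq_div_iff hm2]; linarith [hb']
  have hs : ((m + k + 1).choose (k + 1) : ℚ)
      = ((m + k + 2).choose (k + 1) : ℚ) * ((m : ℚ) + 1) / ((m : ℚ) + (k : ℚ) + 2) := by
    rw [eq_div_iff hmk2]; linarith [hd']
  have hv : ((m + k + 1).choose k : ℚ)
      = ((m + k + 2).choose (k + 1) : ℚ) * ((k : ℚ) + 1) / ((m : ℚ) + (k : ℚ) + 2) := by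
    rw [eq_div_iff hmk2]; linarith [hf']
  simp only [F, Bc]
  rw [show m + 2 + (k + 1) = m + k + 3 from by omega,
      show m + 1 + (k + 1) = m + k + 2 from by omega,
      show m + (k + 1) = m + k + 1 from by omega,
      show m + 1 + k = m + k + 1 from by omega]
  rcases Nat.lt_or_ge k (m + 1) with hk' | hk'
  · -- generic case `k ≤ m`
    have hkm : k ≤ m := by omega
    have ha := Nat.choose_mul_succ_eq (m + 1) (k + 1)
    have hc := Nat.choose_mul_succ_eq m (k + 1)
    have he := Nat.choose_succ_right_eq (m + 1) k
    rw [show m + 1 + 1 = m + 2 from rfl,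
        show m + 2 - (k + 1) = m + 1 - k from by omega] at ha
    rw [show m + 1 - (k + 1) = m - k from by omega] at hc
    have ha' := congrArg (Nat.cast : ℕ → ℚ) ha
    have hc' := congrArg (Nat.cast : ℕ → ℚ) hc
    have he' := congrArg (Nat.cast : ℕ → ℚ) he
    have hcast1 : ((m + 1 - k : ℕ) : ℚ) = (m : ℚ) + 1 - (k : ℚ) := by
      rw [Nat.cast_sub hk]; push_cast; ring
    have hcast2 : ((m - k : ℕ) : ℚ) = (m : ℚ) - (k : ℚ) := by
      rw [Nat.cast_sub hkm]
    push_cast [hcast1, hcast2] at ha' hc' he'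
    have hm1k : ((m : ℚ) + 1 - (k : ℚ)) ≠ 0 := by
      have : (k : ℚ) ≤ m := by exact_mod_cast hkm
      intro h; nlinarith
    have hm1 : ((m : ℚ) + 1) ≠ 0 := by positivity
    have hp : ((m + 2).choose (k + 1) : ℚ)
        = ((m + 1).choose (k + 1) : ℚ) * ((m : ℚ) + 2) / ((m : ℚ) + 1 - k) := by
      rw [eq_div_iff hm1k]; linarith [ha']
    have hr : (m.choose (k + 1) : ℚ)
        = ((m + 1).choose (k + 1) : ℚ) * ((m : ℚ) - k) / ((m : ℚ) + 1) := by
      rw [eq_div_iff hm1]; linarith [hc']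
    have hu : ((m + 1).choose k : ℚ)
        = ((m + 1).choose (k + 1) : ℚ) * ((k : ℚ) + 1) / ((m : ℚ) + 1 - k) := by
      rw [eq_div_iff hm1k]; linarith [he']
    rw [hp, hq, hr, hs, hu, hv]
    push_cast
    set x : ℚ := ((m + 1).choose (k + 1) : ℚ) with hxdef
    set y : ℚ := ((m + k + 2).choose (k + 1) : ℚ) with hydef
    field_simp
    ring
  · -- boundary case `k = m + 1`
    have hk2 : k = m + 1 := by omega
    subst hk2
    have hx : (m + 1).choose (m + 1 + 1) = 0 := Nat.choose_eq_zero_of_lt (by omega)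
    have hrr : m.choose (m + 1 + 1) = 0 := Nat.choose_eq_zero_of_lt (by omega)
    have hpp : (m + 2).choose (m + 1 + 1) = 1 := by
      rw [show m + 1 + 1 = m + 2 from rfl, Nat.choose_self]
    have huu : (m + 1).choose (m + 1) = 1 := Nat.choose_self _
    rw [hx, hrr, hpp, huu, hq, hv]
    push_cast
    set y : ℚ := ((m + (m + 1) + 2).choose (m + 1 + 1) : ℚ) with hydef
    field_simp
    ring

/-- The Apéry numbers. -/
def a (n : ℕ) : ℚ := ∑ k ∈ range (n + 1), F n k

/-- The local WZ identity at column `0`. -/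
lemma local0 (m : ℕ) :
    ((m : ℚ) + 2) ^ 3 * F (m + 2) 0
      - (34 * ((m : ℚ) + 1) ^ 3 + 51 * ((m : ℚ) + 1) ^ 2 + 27 * ((m : ℚ) + 1) + 5)
          * F (m + 1) 0
      + ((m : ℚ) + 1) ^ 3 * F m 0 = Bc (m + 1) 0 := by
  simp only [F, Bc, Nat.choose_zero_right, Nat.add_zero, Nat.cast_one, Nat.cast_zero]
  push_cast
  ring

/-- Apéry's recurrence for the Apéry numbers. -/
lemma apery_rec (m : ℕ) :
    ((m : ℚ) + 2) ^ 3 * a (m + 2)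
      - (34 * ((m : ℚ) + 1) ^ 3 + 51 * ((m : ℚ) + 1) ^ 2 + 27 * ((m : ℚ) + 1) + 5) * a (m + 1)
      + ((m : ℚ) + 1) ^ 3 * a m = 0 := by
  have key : ∑ k ∈ range (m + 3),
      (((m : ℚ) + 2) ^ 3 * F (m + 2) k
        - (34 * ((m : ℚ) + 1) ^ 3 + 51 * ((m : ℚ) + 1) ^ 2 + 27 * ((m : ℚ) + 1) + 5)
            * F (m + 1) k
        + ((m : ℚ) + 1) ^ 3 * F m k)
      = Bc (m + 1) (m + 2) := by
    rw [Finset.sum_range_succ' _ (m + 2)]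
    rw [Finset.sum_congr rfl fun k hk =>
      localS m k (by have := Finset.mem_range.mp hk; omega)]
    rw [Finset.sum_range_sub (fun k => Bc (m + 1) k) (m + 2), local0 m]
    ring
  have hBtop : Bc (m + 1) (m + 2) = 0 := by
    simp [Bc, F, Nat.choose_eq_zero_of_lt (show m + 1 < m + 2 by omega)]
  have e1 : ∑ k ∈ range (m + 3), F (m + 2) k = a (m + 2) := rfl
  have e2 : ∑ k ∈ range (m + 3), F (m + 1) k = a (m + 1) := by
    rw [Finset.sum_range_succ]
    simp [a, F, Nat.choose_eq_zero_of_lt (show m + 1 < m + 2 by omega)]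
  have e3 : ∑ k ∈ range (m + 3), F m k = a m := by
    rw [Finset.sum_range_succ, Finset.sum_range_succ]
    simp [a, F, Nat.choose_eq_zero_of_lt (show m < m + 1 by omega),
      Nat.choose_eq_zero_of_lt (show m < m + 2 by omega)]
  rw [Finset.sum_add_distrib, Finset.sum_sub_distrib, ← Finset.mul_sum, ← Finset.mul_sum,
    ← Finset.mul_sum, e1, e2, e3, hBtop] at key
  linarith [key]

end AperyAux

/-- The generating series `A(t)` of the Apéry numbers is annihilated by
`L = D³ - t(34D³ + 51D² + 27D + 5) + t²(D + 1)³`, where `D = t d/dt`. -/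
theorem apery_series_annihilated :
    tD (tD (tD aperyGenSeries))
      - PowerSeries.X *
          (34 * tD (tD (tD aperyGenSeries)) + 51 * tD (tD aperyGenSeries)
            + 27 * tD aperyGenSeries + 5 * aperyGenSeries)
      + PowerSeries.X ^ 2 *
          (tD (tD (tD aperyGenSeries)) + 3 * tD (tD aperyGenSeries)
            + 3 * tD aperyGenSeries + aperyGenSeries) = 0 := by
  have hA : aperyGenSeries = PowerSeries.mk fun n => AperyAux.a n := rfl
  have h34 : (34 : PowerSeries ℚ) = PowerSeries.C 34 := (map_ofNat (PowerSeries.C) 34).symm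
  have h51 : (51 : PowerSeries ℚ) = PowerSeries.C 51 := (map_ofNat (PowerSeries.C) 51).symm
  have h27 : (27 : PowerSeries ℚ) = PowerSeries.C 27 := (map_ofNat (PowerSeries.C) 27).symm
  have h5 : (5 : PowerSeries ℚ) = PowerSeries.C 5 := (map_ofNat (PowerSeries.C) 5).symm
  have h3 : (3 : PowerSeries ℚ) = PowerSeries.C 3 := (map_ofNat (PowerSeries.C) 3).symm
  rw [hA, h34, h51, h27, h5, h3, pow_two, mul_assoc]
  ext n
  rcases n with _ | n
  · simp [tD, PowerSeries.coeff_zero_eq_constantCoeff, map_sub, map_add, map_mul,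
      PowerSeries.constantCoeff_X]
  rcases n with _ | m
  · simp only [map_add, map_sub, PowerSeries.coeff_succ_X_mul, PowerSeries.coeff_C_mul,
      tD, PowerSeries.coeff_mk, PowerSeries.coeff_zero_eq_constantCoeff, map_mul,
      PowerSeries.constantCoeff_X, zero_mul, map_zero]
    have ha0 : AperyAux.a 0 = 1 := by simp [AperyAux.a, AperyAux.F]
    have ha1 : AperyAux.a 1 = 5 := by
      simp [AperyAux.a, AperyAux.F, Finset.sum_range_succ]
      norm_num
    rw [ha0, ha1]
    norm_num
  · simp only [map_add, map_sub, PowerSeries.coeff_succ_X_mul, PowerSeries.coeff_C_mul,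
      tD, PowerSeries.coeff_mk, map_zero]
    push_cast
    linear_combination AperyAux.apery_rec m
end

section
/- For every nonnegative integer n, the constant term of F(x,y,z)^n, where F(x,y,z) = (y-1)(z-1)(x+z-1)(yz - x - z + 1) / (xyz), equals the Apéry number A_n = \sum_{k=0}^n \binom{n}{k}^2 \binom{n+k}{k}^2. -/
open AddMonoidAlgebra

/-- Monomial `x^a y^b z^c` in the Laurent polynomial ring
`ℚ[x^±, y^±, z^±] = AddMonoidAlgebra ℚ (Fin 3 → ℤ)`. -/
noncomputable def laurentMono3 (v : Fin 3 → ℤ) : AddMonoidAlgebra ℚ (Fin 3 → ℤ) :=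
  AddMonoidAlgebra.single v 1

/-- The Laurent polynomial
`F(x,y,z) = (y-1)(z-1)(x+z-1)(yz-x-z+1)/(xyz)`. -/
noncomputable def beukersLaurent : AddMonoidAlgebra ℚ (Fin 3 → ℤ) :=
  laurentMono3 ![-1, -1, -1] *
    ((laurentMono3 ![0, 1, 0] - 1) * (laurentMono3 ![0, 0, 1] - 1) *
      (laurentMono3 ![1, 0, 0] + laurentMono3 ![0, 0, 1] - 1) *
      (laurentMono3 ![0, 1, 1] - laurentMono3 ![1, 0, 0] - laurentMono3 ![0, 0, 1] + 1))

namespace BeukersAux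

open MvPolynomial Finset

noncomputable section

def iota : (Fin 3 →₀ ℕ) →+ (Fin 3 → ℤ) where
  toFun d := fun i => (d i : ℤ)
  map_zero' := by ext i; simp
  map_add' d e := by ext i; simp

lemma iota_inj : Function.Injective iota := by
  intro d e h; ext i
  have := congrFun h i
  simpa [iota] using this

def Phi : MvPolynomial (Fin 3) ℚ →+* AddMonoidAlgebra ℚ (Fin 3 → ℤ) :=
  AddMonoidAlgebra.mapDomainRingHom ℚ iota

lemma Phi_apply (p : MvPolynomial (Fin 3) ℚ) (d : Fin 3 →₀ ℕ) :
    (Phi p).coeff (iota d) = MvPolynomial.coeff d p :=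
  Finsupp.mapDomain_apply iota_inj _ _

lemma Phi_X (i : Fin 3) :
    Phi (X i) = AddMonoidAlgebra.single (iota (Finsupp.single i 1)) 1 := by
  show AddMonoidAlgebra.mapDomain iota (MvPolynomial.X i) = _
  exact AddMonoidAlgebra.mapDomain_single

/-- The polynomial part of `beukersLaurent`. -/
def Q : MvPolynomial (Fin 3) ℚ :=
  (X 1 - 1) * (X 2 - 1) * (X 0 + X 2 - 1) * (X 1 * X 2 - X 0 - X 2 + 1)

lemma iota_e0 : iota (Finsupp.single (0 : Fin 3) 1) = ![1, 0, 0] := by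
  funext i; fin_cases i <;> simp [iota]
lemma iota_e1 : iota (Finsupp.single (1 : Fin 3) 1) = ![0, 1, 0] := by
  funext i; fin_cases i <;> simp [iota, Finsupp.single_apply]
lemma iota_e2 : iota (Finsupp.single (2 : Fin 3) 1) = ![0, 0, 1] := by
  funext i; fin_cases i <;> simp [iota, Finsupp.single_apply]

lemma Phi_X0 : Phi (X 0) = laurentMono3 ![1, 0, 0] := by rw [Phi_X, iota_e0]; rfl
lemma Phi_X1 : Phi (X 1) = laurentMono3 ![0, 1, 0] := by rw [Phi_X, iota_e1]; rfl
lemma Phi_X2 : Phi (X 2) = laurentMono3 ![0, 0, 1] := by rw [Phi_X, iota_e2]; rfl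

lemma mono_mul (v w : Fin 3 → ℤ) :
    laurentMono3 v * laurentMono3 w = laurentMono3 (v + w) := by
  simp [laurentMono3, AddMonoidAlgebra.single_mul_single]

lemma Phi_Q : Phi Q = (laurentMono3 ![0, 1, 0] - 1) * (laurentMono3 ![0, 0, 1] - 1) *
      (laurentMono3 ![1, 0, 0] + laurentMono3 ![0, 0, 1] - 1) *
      (laurentMono3 ![0, 1, 1] - laurentMono3 ![1, 0, 0] - laurentMono3 ![0, 0, 1] + 1) := by
  have h12 : laurentMono3 ![0, 1, 0] * laurentMono3 ![0, 0, 1] = laurentMono3 ![0, 1, 1] := by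
    rw [mono_mul]; congr 1; funext i; fin_cases i <;> rfl
  simp only [Q, map_mul, map_sub, map_add, map_one, Phi_X0, Phi_X1, Phi_X2, h12]

def d1 (n : ℕ) : Fin 1 →₀ ℕ := Finsupp.cons n 0
def d2 (n : ℕ) : Fin 2 →₀ ℕ := Finsupp.cons n (d1 n)
def d3 (n : ℕ) : Fin 3 →₀ ℕ := Finsupp.cons n (d2 n)

lemma d3_apply (n : ℕ) (i : Fin 3) : d3 n i = n := by
  fin_cases i
  · exact Finsupp.cons_zero _ _
  · exact (Finsupp.cons_succ 0 _ _).trans (Finsupp.cons_zero _ _)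
  · exact (Finsupp.cons_succ 1 _ _).trans ((Finsupp.cons_succ 0 _ _).trans (Finsupp.cons_zero _ _))

lemma key2 (n : ℕ) : (beukersLaurent ^ n).coeff 0 = MvPolynomial.coeff (d3 n) (Q ^ n) := by
  have hb : beukersLaurent = AddMonoidAlgebra.single (fun _ => (-1 : ℤ)) 1 * Phi Q := by
    rw [Phi_Q, beukersLaurent]
    congr 1
    show laurentMono3 _ = _
    rw [laurentMono3]
    congr 1
    funext i; fin_cases i <;> rfl
  rw [hb, mul_pow, ← map_pow, AddMonoidAlgebra.single_pow, one_pow,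
    AddMonoidAlgebra.coeff_single_mul_apply]
  have hv : (-(n • fun _ => (-1 : ℤ)) + 0) = iota (d3 n) := by
    funext i
    simp [iota, d3_apply]
  rw [one_mul, hv, Phi_apply]

def c1 (n j : ℕ) : ℚ := (-1) ^ (j + n) * n.choose j * (2 * n - j).choose n
def c2 (n j : ℕ) : ℚ := c1 n j * ((-1) ^ j * n.choose j)
def c3 (n j : ℕ) : ℚ := c2 n j * ((-1) ^ n * (2 * n - j).choose (n - j))

lemma finSuccEquiv_C' {m : ℕ} (a : ℚ) :
    finSuccEquiv ℚ m (MvPolynomial.C a) = Polynomial.C (MvPolynomial.C a) := by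
  simp [finSuccEquiv_apply]

lemma stage1 (n : ℕ) :
    (finSuccEquiv ℚ 2 (Q ^ n)).coeff n =
      ∑ j ∈ range (n + 1), MvPolynomial.C (c1 n j) *
        ((X 0 - 1) ^ n * (X 0) ^ j * ((X 1) ^ j * (X 1 - 1) ^ (2 * n - j))) := by
  set Y : MvPolynomial (Fin 2) ℚ := X 0 with hY
  set Z : MvPolynomial (Fin 2) ℚ := X 1 with hZ
  set t : Polynomial (MvPolynomial (Fin 2) ℚ) := Polynomial.X + Polynomial.C (Z - 1) with ht
  have hQ : finSuccEquiv ℚ 2 Q =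
      Polynomial.C ((Y - 1) * (Z - 1)) * (Polynomial.C (Y * Z) * t - t ^ 2) := by
    have h1 : (1 : Fin 3) = (0 : Fin 2).succ := rfl
    have h2 : (2 : Fin 3) = (1 : Fin 2).succ := rfl
    rw [Q, h1, h2]
    simp only [map_mul, map_sub, map_add, map_one, finSuccEquiv_X_zero, finSuccEquiv_X_succ,
      ht, map_mul, map_sub, map_one]
    ring
  rw [map_pow, hQ, mul_pow, sub_pow, Finset.mul_sum, Polynomial.finset_sum_coeff]
  refine Finset.sum_congr rfl fun j hj => ?_
  have hjn : j ≤ n := by simpa using Nat.lt_succ_iff.mp (Finset.mem_range.mp hj)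
  have he : j + 2 * (n - j) = 2 * n - j := by omega
  have hterm : ∀ T : Polynomial (MvPolynomial (Fin 2) ℚ), (Polynomial.C ((Y - 1) * (Z - 1))) ^ n *
      ((-1) ^ (j + n) * (Polynomial.C (Y * Z) * T) ^ j * (T ^ 2) ^ (n - j) * (n.choose j :
        Polynomial (MvPolynomial (Fin 2) ℚ))) =
      Polynomial.C ((Y - 1) ^ n * (Z - 1) ^ n * (Y * Z) ^ j *
        MvPolynomial.C ((-1) ^ (j + n) * (n.choose j : ℚ))) * T ^ (2 * n - j) := by
    intro T
    rw [← he]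
    simp only [map_mul, map_pow, map_neg, map_one, map_natCast]
    ring
  rw [hterm t, Polynomial.coeff_C_mul, ht, Polynomial.coeff_X_add_C_pow]
  have he2 : 2 * n - j - n = n - j := by omega
  have he3 : 2 * n - j = n + (n - j) := by omega
  rw [he2, c1]
  simp only [map_mul, map_pow, map_neg, map_one, map_natCast, he3, pow_add]
  ring

lemma stage2 (n : ℕ) :
    (finSuccEquiv ℚ 1 (∑ j ∈ range (n + 1), MvPolynomial.C (c1 n j) *
        ((X 0 - 1) ^ n * (X 0) ^ j * ((X 1) ^ j * (X 1 - 1) ^ (2 * n - j))))).coeff n =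
      ∑ j ∈ range (n + 1), MvPolynomial.C (c2 n j) *
        ((X 0 : MvPolynomial (Fin 1) ℚ) ^ j * (X 0 - 1) ^ (2 * n - j)) := by
  rw [map_sum, Polynomial.finset_sum_coeff]
  refine Finset.sum_congr rfl fun j hj => ?_
  have hjn : j ≤ n := Nat.lt_succ_iff.mp (Finset.mem_range.mp hj)
  have h1 : (1 : Fin 2) = (0 : Fin 1).succ := rfl
  rw [h1]
  simp only [map_mul, map_pow, map_sub, map_one, finSuccEquiv_X_zero, finSuccEquiv_X_succ,
    finSuccEquiv_C']
  have hterm : ∀ A : MvPolynomial (Fin 1) ℚ,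
      Polynomial.C (MvPolynomial.C (c1 n j)) *
        ((Polynomial.X - 1) ^ n * Polynomial.X ^ j *
          (Polynomial.C A ^ j * (Polynomial.C A - 1) ^ (2 * n - j))) =
      (Polynomial.C (MvPolynomial.C (c1 n j) * (A ^ j * (A - 1) ^ (2 * n - j))) *
        (Polynomial.X + Polynomial.C (-1 : MvPolynomial (Fin 1) ℚ)) ^ n) * Polynomial.X ^ j := by
    intro A
    simp only [map_mul, map_pow, map_sub, map_one, map_neg]
    ring
  rw [hterm (X 0), Polynomial.coeff_mul_X_pow', if_pos hjn, Polynomial.coeff_C_mul,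
    Polynomial.coeff_X_add_C_pow]
  have h2 : n - (n - j) = j := by omega
  rw [h2, Nat.choose_symm hjn, c2]
  simp only [map_mul, map_pow, map_neg, map_one, map_natCast]
  ring

lemma stage3 (n : ℕ) :
    (finSuccEquiv ℚ 0 (∑ j ∈ range (n + 1), MvPolynomial.C (c2 n j) *
        ((X 0 : MvPolynomial (Fin 1) ℚ) ^ j * (X 0 - 1) ^ (2 * n - j)))).coeff n =
      ∑ j ∈ range (n + 1), MvPolynomial.C (c3 n j) := by
  rw [map_sum, Polynomial.finset_sum_coeff]
  refine Finset.sum_congr rfl fun j hj => ?_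
  have hjn : j ≤ n := Nat.lt_succ_iff.mp (Finset.mem_range.mp hj)
  simp only [map_mul, map_pow, map_sub, map_one, finSuccEquiv_X_zero, finSuccEquiv_C']
  have hterm : Polynomial.C (MvPolynomial.C (c2 n j)) *
        (Polynomial.X ^ j * (Polynomial.X - 1) ^ (2 * n - j)) =
      (Polynomial.C (MvPolynomial.C (c2 n j)) *
        (Polynomial.X + Polynomial.C (-1 : MvPolynomial (Fin 0) ℚ)) ^ (2 * n - j)) *
        Polynomial.X ^ j := by
    simp only [map_neg, map_one]
    ring
  rw [hterm, Polynomial.coeff_mul_X_pow', if_pos hjn, Polynomial.coeff_C_mul,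
    Polynomial.coeff_X_add_C_pow]
  have h2 : 2 * n - j - (n - j) = n := by omega
  rw [h2, c3]
  simp only [map_mul, map_pow, map_neg, map_one, map_natCast]

lemma c3_eq (n j : ℕ) :
    c3 n j = (n.choose j : ℚ) ^ 2 * ((2 * n - j).choose n : ℚ) *
      ((2 * n - j).choose (n - j) : ℚ) := by
  unfold c3 c2 c1
  have hsign : ((-1 : ℚ)) ^ (j + n) * ((-1 : ℚ)) ^ j * ((-1 : ℚ)) ^ n = 1 := by
    rw [← pow_add, ← pow_add]
    exact Even.neg_one_pow ⟨j + n, by ring⟩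
  linear_combination ((n.choose j : ℚ) ^ 2 * ((2 * n - j).choose n : ℚ) *
    ((2 * n - j).choose (n - j) : ℚ)) * hsign

lemma key3 (n : ℕ) : MvPolynomial.coeff (d3 n) (Q ^ n) =
    ∑ k ∈ range (n + 1), (n.choose k : ℚ) ^ 2 * ((n + k).choose k : ℚ) ^ 2 := by
  have e3 : MvPolynomial.coeff (d3 n) (Q ^ n) =
      MvPolynomial.coeff (d2 n) ((finSuccEquiv ℚ 2 (Q ^ n)).coeff n) :=
    (finSuccEquiv_coeff_coeff (d2 n) (Q ^ n) n).symm
  rw [e3, stage1]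
  have e2 : ∀ p : MvPolynomial (Fin 2) ℚ, MvPolynomial.coeff (d2 n) p =
      MvPolynomial.coeff (d1 n) ((finSuccEquiv ℚ 1 p).coeff n) := fun p =>
    (finSuccEquiv_coeff_coeff (d1 n) p n).symm
  rw [e2, stage2]
  have e1 : ∀ p : MvPolynomial (Fin 1) ℚ, MvPolynomial.coeff (d1 n) p =
      MvPolynomial.coeff (0 : Fin 0 →₀ ℕ) ((finSuccEquiv ℚ 0 p).coeff n) := fun p =>
    (finSuccEquiv_coeff_coeff (0 : Fin 0 →₀ ℕ) p n).symm
  rw [e1, stage3]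
  have hcoeff : MvPolynomial.coeff (0 : Fin 0 →₀ ℕ)
      (∑ j ∈ range (n + 1), (MvPolynomial.C (c3 n j) : MvPolynomial (Fin 0) ℚ)) =
      ∑ j ∈ range (n + 1), c3 n j := by
    rw [MvPolynomial.coeff_sum]
    exact Finset.sum_congr rfl fun j _ => MvPolynomial.coeff_zero_C _
  rw [hcoeff, ← Finset.sum_range_reflect]
  refine Finset.sum_congr rfl fun k hk => ?_
  have hkn : k ≤ n := Nat.lt_succ_iff.mp (Finset.mem_range.mp hk)
  have h1 : n + 1 - 1 - k = n - k := by omega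
  rw [h1, c3_eq]
  have h2 : n - (n - k) = k := by omega
  have h3 : 2 * n - (n - k) = n + k := by omega
  have h4 : (n + k).choose n = (n + k).choose k := by
    have := Nat.choose_symm (Nat.le_add_left k n)
    simpa [Nat.add_sub_cancel] using this
  rw [h2, h3, Nat.choose_symm hkn, h4]
  ring

end

end BeukersAux

/-- For every `n ≥ 0`, the constant term of `F(x,y,z)ⁿ` equals the Apéry number
`A n = ∑_{k=0}^n (n choose k)^2 ((n+k) choose k)^2`. -/
theorem constantTerm_beukersLaurent_pow (n : ℕ) :
    (beukersLaurent ^ n).coeff 0 =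
      ∑ k ∈ Finset.range (n + 1), (n.choose k : ℚ) ^ 2 * ((n + k).choose k : ℚ) ^ 2 := by
  rw [BeukersAux.key2, BeukersAux.key3]
end

section
/- A Laurent polynomial q in m variables whose Newton polytope has lattice width one can, after a monomial change of coordinates given by an element of GL_m(\mathbb{Z}) acting on the exponent lattice, be written in the form q = F(x_1,\ldots,x_{m-1}) x_m + G(x_1,\ldots,x_{m-1}) for Laurent polynomials F, G in the first m-1 variables, up to multiplication by a monomial. -/
/-- Splitting of a module along a surjective functional with section `u`. -/
noncomputable def splitEquiv {m : ℕ}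
    (φ : (Fin m → ℤ) →ₗ[ℤ] ℤ) (u : Fin m → ℤ) (hu : φ u = 1) :
    (Fin m → ℤ) ≃ₗ[ℤ] (LinearMap.ker φ) × ℤ :=
  LinearEquiv.ofLinear
    ((LinearMap.codRestrict (LinearMap.ker φ)
        (LinearMap.id - (LinearMap.toSpanSingleton ℤ (Fin m → ℤ) u).comp φ)
        (fun e => by
          simp only [LinearMap.mem_ker, LinearMap.sub_apply, LinearMap.id_apply,
            LinearMap.coe_comp, Function.comp_apply, LinearMap.toSpanSingleton_apply,
            map_sub, map_smul, smul_eq_mul, hu, mul_one, sub_self])).prod φ)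
    ((LinearMap.ker φ).subtype.coprod (LinearMap.toSpanSingleton ℤ (Fin m → ℤ) u))
    (by
      apply LinearMap.ext
      rintro ⟨⟨k, hk⟩, t⟩
      have hk' : φ k = 0 := hk
      have key : φ (k + t • u) = t := by
        simp only [map_add, map_smul, hk', hu, smul_eq_mul, mul_one, zero_add]
      ext
      · simp only [LinearMap.coe_comp, Function.comp_apply, LinearMap.coprod_apply,
          Submodule.coe_subtype, LinearMap.toSpanSingleton_apply, LinearMap.prod_apply,
          Function.prod, LinearMap.codRestrict_apply, LinearMap.sub_apply, LinearMap.id_apply,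
          key, LinearMap.id_coe, id_eq, add_sub_cancel_right]
      · simp only [LinearMap.coe_comp, Function.comp_apply, LinearMap.coprod_apply,
          Submodule.coe_subtype, LinearMap.toSpanSingleton_apply, LinearMap.prod_apply,
          Function.prod, key, LinearMap.id_coe, id_eq])
    (by
      apply LinearMap.ext
      intro e
      simp only [LinearMap.coe_comp, Function.comp_apply, LinearMap.coprod_apply,
        Submodule.coe_subtype, LinearMap.toSpanSingleton_apply, LinearMap.prod_apply,
        Function.prod, LinearMap.codRestrict_apply, LinearMap.sub_apply, LinearMap.id_apply,
        LinearMap.id_coe, id_eq, sub_add_cancel])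

/-- Appending a last coordinate. -/
noncomputable def snocEquiv (m : ℕ) (hm : 0 < m) :
    ((Fin (m - 1) → ℤ) × ℤ) ≃ₗ[ℤ] (Fin m → ℤ) where
  toFun p i := if h : (i : ℕ) < m - 1 then p.1 ⟨i, h⟩ else p.2
  invFun f := (fun j => f ⟨j.val, by have := j.isLt; omega⟩, f ⟨m - 1, by omega⟩)
  map_add' p q := by
    funext i
    by_cases h : (i : ℕ) < m - 1 <;> simp [h]
  map_smul' t p := by
    funext i
    by_cases h : (i : ℕ) < m - 1 <;> simp [h]
  left_inv p := by
    ext j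
    · simp [j.isLt]
    · simp [show ¬ (m - 1 < m - 1) from lt_irrefl _]
  right_inv f := by
    funext i
    by_cases h : (i : ℕ) < m - 1
    · simp [h]
    · have hi : (i : ℕ) = m - 1 := by have := i.isLt; omega
      simp only [h, dif_neg, not_false_iff]
      congr 1
      exact (Fin.ext hi.symm)

/-- A Laurent polynomial `q` in `m` variables whose Newton polytope has lattice width one
(witnessed by a surjective linear functional `φ` on the exponent lattice taking exactly the
values `c` and `c + 1` on the support of `q`) can, after a monomial change of coordinates
given by an element of `GL_m(ℤ)` acting on the exponent lattice (a `ℤ`-linear automorphism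
`σ` of the exponent lattice), be written, up to multiplication by a monomial `x^v`, in the
form `q = F·x_m + G`, where `F` and `G` are Laurent polynomials in the first `m - 1`
variables (i.e. their exponents have vanishing last coordinate). -/
theorem laurent_width_one_normal_form (m : ℕ) (hm : 0 < m)
    (q : AddMonoidAlgebra ℚ (Fin m → ℤ))
    (φ : (Fin m → ℤ) →ₗ[ℤ] ℤ) (hφ : Function.Surjective φ) (c : ℤ)
    (hslab : ∀ e ∈ q.coeff.support, φ e = c ∨ φ e = c + 1)
    (hlo : ∃ e ∈ q.coeff.support, φ e = c) (hhi : ∃ e ∈ q.coeff.support, φ e = c + 1) :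
    ∃ (σ : (Fin m → ℤ) ≃ₗ[ℤ] (Fin m → ℤ)) (v : Fin m → ℤ)
      (F G : AddMonoidAlgebra ℚ (Fin m → ℤ)),
      (∀ e ∈ F.coeff.support, e ⟨m - 1, by omega⟩ = 0) ∧
      (∀ e ∈ G.coeff.support, e ⟨m - 1, by omega⟩ = 0) ∧
      AddMonoidAlgebra.ofCoeff (Finsupp.mapDomain σ q.coeff) =
        AddMonoidAlgebra.single v 1 *
          (F * AddMonoidAlgebra.single (Pi.single ⟨m - 1, by omega⟩ 1) 1 + G) := by
  classical
  obtain ⟨u, hu⟩ := hφ 1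
  have hrank : Module.finrank ℤ (LinearMap.ker φ) = m - 1 := by
    have h1 := (splitEquiv φ u hu).finrank_eq
    rw [Module.finrank_fin_fun, Module.finrank_prod, Module.finrank_self] at h1
    omega
  let b : Module.Basis (Fin (m - 1)) ℤ (LinearMap.ker φ) :=
    Module.finBasisOfFinrankEq ℤ (LinearMap.ker φ) hrank
  set last : Fin m := ⟨m - 1, by omega⟩ with hlast
  let σ : (Fin m → ℤ) ≃ₗ[ℤ] (Fin m → ℤ) :=
    (splitEquiv φ u hu).trans
      ((b.equivFun.prodCongr (LinearEquiv.refl ℤ ℤ)).trans (snocEquiv m hm))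
  have key : ∀ e : Fin m → ℤ, σ e last = φ e := fun e => dif_neg (lt_irrefl _)
  set Q : AddMonoidAlgebra ℚ (Fin m → ℤ) :=
    AddMonoidAlgebra.ofCoeff (Finsupp.mapDomain (⇑σ) q.coeff) with hQdef
  have hsup : ∀ e ∈ Q.coeff.support, e last = c ∨ e last = c + 1 := by
    intro e he
    obtain ⟨e', he', rfl⟩ := Finset.mem_image.mp (Finsupp.mapDomain_support he)
    rw [key e']
    exact hslab e' he'
  set δ : Fin m → ℤ := Pi.single last 1 with hδ
  set v : Fin m → ℤ := Pi.single last c with hv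
  set Q₀ : AddMonoidAlgebra ℚ (Fin m → ℤ) :=
    AddMonoidAlgebra.ofCoeff (Q.coeff.filter (fun e => e last = c)) with hQ₀
  set Q₁ : AddMonoidAlgebra ℚ (Fin m → ℤ) :=
    AddMonoidAlgebra.ofCoeff (Q.coeff.filter (fun e => ¬ e last = c)) with hQ₁
  refine ⟨σ, v, AddMonoidAlgebra.single (-(v + δ)) 1 * Q₁,
    AddMonoidAlgebra.single (-v) 1 * Q₀, ?_, ?_, ?_⟩
  · intro e he
    rw [Finsupp.mem_support_iff, AddMonoidAlgebra.coeff_single_mul_apply, one_mul] at he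
    have hmem : -(-(v + δ)) + e ∈ Q₁.coeff.support := Finsupp.mem_support_iff.mpr he
    rw [hQ₁, AddMonoidAlgebra.coeff_ofCoeff, Finsupp.support_filter, Finset.mem_filter] at hmem
    have h1 : (-(-(v + δ)) + e) last = c + 1 := by
      rcases hsup _ hmem.1 with h | h
      · exact absurd h hmem.2
      · exact h
    have h2 : (-(-(v + δ)) + e) last = (v + δ) last + e last := by simp
    have h3 : (v + δ) last = c + 1 := by simp [hv, hδ, Pi.single_eq_same]
    rw [h2, h3] at h1
    omega
  · intro e he
    rw [Finsupp.mem_support_iff, AddMonoidAlgebra.coeff_single_mul_apply, one_mul] at he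
    have hmem : -(-v) + e ∈ Q₀.coeff.support := Finsupp.mem_support_iff.mpr he
    rw [hQ₀, AddMonoidAlgebra.coeff_ofCoeff, Finsupp.support_filter, Finset.mem_filter] at hmem
    have h1 : (-(-v) + e) last = c := hmem.2
    have h2 : (-(-v) + e) last = v last + e last := by simp
    have h3 : v last = c := by simp [hv, Pi.single_eq_same]
    rw [h2, h3] at h1
    omega
  · have hsplit : Q₀ + Q₁ = Q := by
      rw [hQ₀, hQ₁, ← AddMonoidAlgebra.ofCoeff_add, Finsupp.filter_pos_add_filter_neg]
    have e1 : AddMonoidAlgebra.single v (1 : ℚ) *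
        (AddMonoidAlgebra.single (-(v + δ)) 1 * Q₁ * AddMonoidAlgebra.single δ 1) = Q₁ := by
      rw [show AddMonoidAlgebra.single v (1 : ℚ) *
          (AddMonoidAlgebra.single (-(v + δ)) 1 * Q₁ * AddMonoidAlgebra.single δ 1) =
          (AddMonoidAlgebra.single v (1 : ℚ) * AddMonoidAlgebra.single (-(v + δ)) 1 *
            AddMonoidAlgebra.single δ 1) * Q₁ from by ring]
      rw [AddMonoidAlgebra.single_mul_single, AddMonoidAlgebra.single_mul_single]
      rw [show v + -(v + δ) + δ = 0 from by abel]
      simp [← AddMonoidAlgebra.one_def]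
    have e2 : AddMonoidAlgebra.single v (1 : ℚ) *
        (AddMonoidAlgebra.single (-v) 1 * Q₀) = Q₀ := by
      rw [← mul_assoc, AddMonoidAlgebra.single_mul_single]
      rw [show v + -v = 0 from by abel]
      simp [← AddMonoidAlgebra.one_def]
    calc AddMonoidAlgebra.ofCoeff (Finsupp.mapDomain (⇑σ) q.coeff) = Q₁ + Q₀ := by rw [← hQdef, ← hsplit, add_comm]
    _ = AddMonoidAlgebra.single v 1 *
          (AddMonoidAlgebra.single (-(v + δ)) 1 * Q₁ * AddMonoidAlgebra.single δ 1 +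
            AddMonoidAlgebra.single (-v) 1 * Q₀) := by rw [mul_add, e1, e2]
end

section
/- If a lattice Minkowski decomposition of a lattice polytope \delta exists, then every face \delta' of \delta inherits an induced lattice Minkowski decomposition: the faces of the Minkowski summands supporting \delta' give a lattice Minkowski decomposition of \delta'. -/
open Pointwise

/-- A lattice Minkowski decomposition of a lattice polytope induces a lattice Minkowski
decomposition of each of its faces. Here `P = ∑ᵢ δᵢ` is a Minkowski sum of lattice polytopes
(convex hulls of nonempty finite sets of lattice points) with
`P ∩ ℤⁿ = ∑ᵢ (δᵢ ∩ ℤⁿ)`; the face of a polytope in direction of a linear functional `u` is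
the set of its points maximising `u`. Then for every `u` the face of `P` at `u` is the
Minkowski sum of the faces of the `δᵢ` at `u`, and its lattice points are the Minkowski sum
of the lattice points of the faces of the `δᵢ`. -/
theorem lattice_minkowski_decomposition_face (n k : ℕ)
    (δ : Fin k → Set (Fin n → ℝ)) (S : Fin k → Finset (Fin n → ℤ))
    (hSne : ∀ i, (S i).Nonempty)
    (hδ : ∀ i, δ i = convexHull ℝ ((fun v : Fin n → ℤ => fun j => (v j : ℝ)) '' (S i)))
    (P : Set (Fin n → ℝ)) (hP : P = ∑ i, δ i)
    (hlat : {v : Fin n → ℤ | (fun j => (v j : ℝ)) ∈ P}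
      = ∑ i, {v : Fin n → ℤ | (fun j => (v j : ℝ)) ∈ δ i})
    (u : (Fin n → ℝ) →ₗ[ℝ] ℝ) :
    ({x ∈ P | ∀ y ∈ P, u y ≤ u x}
      = ∑ i, {x ∈ δ i | ∀ y ∈ δ i, u y ≤ u x}) ∧
    ({v : Fin n → ℤ | (fun j => (v j : ℝ)) ∈ {x ∈ P | ∀ y ∈ P, u y ≤ u x}}
      = ∑ i, {v : Fin n → ℤ |
          (fun j => (v j : ℝ)) ∈ {x ∈ δ i | ∀ y ∈ δ i, u y ≤ u x}}) := by
  classical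
  -- the maximum of u on δ i
  set m : Fin k → ℝ := fun i =>
    (((S i).image (fun v => u (fun j => (v j : ℝ))))).max'
      ((hSne i).image _) with hm
  -- upper bound
  have hub : ∀ i, ∀ x ∈ δ i, u x ≤ m i := by
    intro i x hx
    rw [hδ i] at hx
    have hsub : convexHull ℝ ((fun v : Fin n → ℤ => fun j => (v j : ℝ)) '' (S i))
        ⊆ {x | u x ≤ m i} := by
      apply convexHull_min
      · rintro _ ⟨v, hv, rfl⟩
        exact Finset.le_max' ((S i).image (fun v => u (fun j => (v j : ℝ)))) _
          (Finset.mem_image_of_mem _ hv)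
      · exact convex_halfSpace_le u.isLinear _
    exact hsub hx
  -- witnesses achieving the maximum
  have hwit : ∀ i, ∃ v ∈ S i, u (fun j => (v j : ℝ)) = m i := by
    intro i
    have := ((S i).image (fun v => u (fun j => (v j : ℝ)))).max'_mem ((hSne i).image _)
    rw [Finset.mem_image] at this
    obtain ⟨v, hv, hv'⟩ := this
    exact ⟨v, hv, hv'⟩
  choose w hw hwu using hwit
  have hwδ : ∀ i, (fun j => ((w i) j : ℝ)) ∈ δ i := by
    intro i
    rw [hδ i]
    exact subset_convexHull ℝ _ (Set.mem_image_of_mem _ (hw i))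
  -- membership in the face of δ i iff membership with u x = m i
  have hface : ∀ i x, (x ∈ δ i ∧ ∀ y ∈ δ i, u y ≤ u x) ↔ (x ∈ δ i ∧ u x = m i) := by
    intro i x
    constructor
    · rintro ⟨hx, hmax⟩
      exact ⟨hx, le_antisymm (hub i x hx) ((hwu i) ▸ hmax _ (hwδ i))⟩
    · rintro ⟨hx, hux⟩
      exact ⟨hx, fun y hy => hux ▸ hub i y hy⟩
  -- upper bound for P
  have hubP : ∀ x ∈ P, u x ≤ ∑ i, m i := by
    intro x hx
    rw [hP, Set.mem_fintype_sum] at hx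
    obtain ⟨g, hg, rfl⟩ := hx
    rw [map_sum]
    exact Finset.sum_le_sum fun i _ => hub i _ (hg i)
  -- the sum of the witnesses lies in P and achieves ∑ m i
  have hWP : (∑ i, fun j => ((w i) j : ℝ)) ∈ P := by
    rw [hP]
    exact Set.finset_sum_mem_finset_sum _ _ _ fun i _ => hwδ i
  have hWu : u (∑ i, fun j => ((w i) j : ℝ)) = ∑ i, m i := by
    rw [map_sum]
    exact Finset.sum_congr rfl fun i _ => hwu i
  have hfaceP : ∀ x, (x ∈ P ∧ ∀ y ∈ P, u y ≤ u x) ↔ (x ∈ P ∧ u x = ∑ i, m i) := by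
    intro x
    constructor
    · rintro ⟨hx, hmax⟩
      exact ⟨hx, le_antisymm (hubP x hx) (hWu ▸ hmax _ hWP)⟩
    · rintro ⟨hx, hux⟩
      exact ⟨hx, fun y hy => hux ▸ hubP y hy⟩
  constructor
  · ext x
    simp only [Set.mem_setOf_eq, Set.mem_fintype_sum, hfaceP]
    constructor
    · rintro ⟨hx, hux⟩
      rw [hP, Set.mem_fintype_sum] at hx
      obtain ⟨g, hg, rfl⟩ := hx
      rw [map_sum] at hux
      have heq : ∀ i ∈ Finset.univ, u (g i) = m i := by
        rw [← Finset.sum_eq_sum_iff_of_le fun i _ => hub i _ (hg i)]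
        exact hux
      refine ⟨g, fun i => ?_, rfl⟩
      exact (hface i (g i)).2 ⟨hg i, heq i (Finset.mem_univ i)⟩
    · rintro ⟨g, hg, rfl⟩
      have hg' : ∀ i, g i ∈ δ i ∧ u (g i) = m i := fun i => (hface i (g i)).1 (hg i)
      constructor
      · rw [hP]; exact Set.finset_sum_mem_finset_sum _ _ _ fun i _ => (hg' i).1
      · rw [map_sum]
        exact Finset.sum_congr rfl fun i _ => (hg' i).2
  · ext v
    simp only [Set.mem_setOf_eq, Set.mem_fintype_sum, hfaceP]
    constructor
    · rintro ⟨hv, huv⟩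
      have hv' : v ∈ {v : Fin n → ℤ | (fun j => (v j : ℝ)) ∈ P} := hv
      rw [hlat, Set.mem_fintype_sum] at hv'
      obtain ⟨g, hg, hgv⟩ := hv'
      have hcast : (fun j => ((v : Fin n → ℤ) j : ℝ)) = ∑ i, fun j => ((g i) j : ℝ) := by
        funext j
        rw [← hgv]
        simp [Finset.sum_apply]
      rw [hcast, map_sum] at huv
      have heq : ∀ i ∈ Finset.univ, u (fun j => ((g i) j : ℝ)) = m i := by
        rw [← Finset.sum_eq_sum_iff_of_le fun i _ => hub i _ (hg i)]
        exact huv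
      refine ⟨g, fun i => ?_, hgv⟩
      exact (hface i _).2 ⟨hg i, heq i (Finset.mem_univ i)⟩
    · rintro ⟨g, hg, hgv⟩
      have hg' : ∀ i, (fun j => ((g i) j : ℝ)) ∈ δ i ∧ u (fun j => ((g i) j : ℝ)) = m i :=
        fun i => (hface i _).1 (hg i)
      have hcast : (fun j => ((v : Fin n → ℤ) j : ℝ)) = ∑ i, fun j => ((g i) j : ℝ) := by
        funext j
        rw [← hgv]
        simp [Finset.sum_apply]
      constructor
      · rw [hcast, hP]
        exact Set.finset_sum_mem_finset_sum _ _ _ fun i _ => (hg' i).1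
      · rw [hcast, map_sum]
        exact Finset.sum_congr rfl fun i _ => (hg' i).2
end
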